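/- Let c, s : ℝ² → ℝ be monotone (componentwise order), let Z = [z₁ˡ, z₁ᵘ] × [z₂ˡ, z₂ᵘ] contain the unique minimizer z* of s over {z ∈ Z : c(z) ≥ 1}, let Qᵘ be a finite set of points of Z with c(z) ≥ 1 for all z ∈ Qᵘ, and Qˡ a finite set with c(z) < 1 for all z ∈ Qˡ. Define Γ = {(z₁, z₂) ∈ Z : F₂ˡ(z₁; Qˡ) ≤ z₂ ≤ F₂ᵘ(z₁; Qᵘ)}, where F₂ᵘ(z₁; Qᵘ) = min{z₂' : (z₁', z₂') ∈ Qᵘ, z₁' ≤ z₁} (min ∅ := z₂ᵘ) and F₂ˡ(z₁; Qˡ) = max{z₂' : (z₁', z₂') ∈ Qˡ, z₁' ≥ z₁} (max ∅ := z₂ˡ). Then z* ∈ Γ. -/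
import Mathlib


/-- The unique constrained minimizer always lies in the region `Γ` between
the lower and the upper frontier maintained by frontier search. -/
theorem stmt9 (c s : ℝ × ℝ → ℝ) (hc : Monotone c) (hs : Monotone s)
    (a b : ℝ × ℝ) (hab : a ≤ b)
    (zstar : ℝ × ℝ) (hmem : zstar ∈ Set.Icc a b) (hfeas : 1 ≤ c zstar)
    (hmin : ∀ z ∈ Set.Icc a b, 1 ≤ c z → s zstar ≤ s z)
    (huniq : ∀ z ∈ Set.Icc a b, 1 ≤ c z → s z = s zstar → z = zstar)
    (Qu Ql : Finset (ℝ × ℝ))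
    (hQuZ : ∀ z ∈ Qu, z ∈ Set.Icc a b) (hQlZ : ∀ z ∈ Ql, z ∈ Set.Icc a b)
    (hQu : ∀ z ∈ Qu, 1 ≤ c z) (hQl : ∀ z ∈ Ql, c z < 1)
    (Fu Fl : ℝ → ℝ)
    (hFu : ∀ z₁ : ℝ, Fu z₁ =
      (insert b.2 ((Qu.filter fun z => z.1 ≤ z₁).image Prod.snd)).min'
        (Finset.insert_nonempty _ _))
    (hFl : ∀ z₁ : ℝ, Fl z₁ =
      (insert a.2 ((Ql.filter fun z => z₁ ≤ z.1).image Prod.snd)).max'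
        (Finset.insert_nonempty _ _)) :
    zstar ∈ {z : ℝ × ℝ | z ∈ Set.Icc a b ∧ Fl z.1 ≤ z.2 ∧ z.2 ≤ Fu z.1} := by
  obtain ⟨ha, hb⟩ := hmem
  refine ⟨⟨ha, hb⟩, ?_, ?_⟩
  · rw [hFl]
    apply Finset.max'_le
    intro y hy
    rcases Finset.mem_insert.mp hy with h | h
    · exact h ▸ ha.2
    · obtain ⟨q, hq, rfl⟩ := Finset.mem_image.mp h
      obtain ⟨hqQ, hq1⟩ := Finset.mem_filter.mp hq
      by_contra hlt
      push_neg at hlt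
      exact absurd (hfeas.trans (hc (Prod.le_def.mpr ⟨hq1, hlt.le⟩)))
        (not_le.mpr (hQl q hqQ))
  · rw [hFu]
    apply Finset.le_min'
    intro y hy
    rcases Finset.mem_insert.mp hy with h | h
    · exact h ▸ hb.2
    · obtain ⟨q, hq, rfl⟩ := Finset.mem_image.mp h
      obtain ⟨hqQ, hq1⟩ := Finset.mem_filter.mp hq
      by_contra hlt
      push_neg at hlt
      set w : ℝ × ℝ := (zstar.1, q.2) with hw
      have hqw : q ≤ w := Prod.le_def.mpr ⟨hq1, le_rfl⟩
      have hwZ : w ∈ Set.Icc a b :=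
        ⟨Prod.le_def.mpr ⟨ha.1, (hQuZ q hqQ).1.2⟩,
         Prod.le_def.mpr ⟨hb.1, (hQuZ q hqQ).2.2⟩⟩
      have hwfeas : 1 ≤ c w := (hQu q hqQ).trans (hc hqw)
      have hwz : w ≤ zstar := Prod.le_def.mpr ⟨le_rfl, hlt.le⟩
      have hsw : s w = s zstar := le_antisymm (hs hwz) (hmin w hwZ hwfeas)
      have := huniq w hwZ hwfeas hsw
      exact absurd (congrArg Prod.snd this) (ne_of_lt hlt)
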